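/- Let A ∈ ℝ^{n×n} be invertible and let E = {x ∈ ℝ^n : ‖Ax‖₂ ≤ 1}. Let U ∈ ℤ^{n×n} be unimodular (|det U| = 1) and suppose the columns b_1, …, b_n of B := AU form an LLL-reduced basis, i.e., the Gram–Schmidt coefficients satisfy |μ_{ij}| ≤ 1/2 for all 1 ≤ i < j ≤ n and ‖b̂_i‖₂² ≤ 2·‖b̂_{i+1}‖₂² for all i = 1,…,n−1. Then either there exists x ∈ ℤ^n \ {0} with x ∈ E, or for every x ∈ E one has ‖U^{−1}x‖₂ ≤ 2^{3n/2}. -/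

import Mathlib

/-!
If a column `bᵢ` of `B = AU` has `‖bᵢ‖ ≤ 1`, the column `Ueᵢ` of `U` is the integer point.
Otherwise take `x ∈ E` and `y = U⁻¹x`, so that `‖By‖ ≤ 1`. In the orthogonal Gram–Schmidt basis,
`By = ∑ᵢ cᵢ b̂ᵢ` with `cᵢ = yᵢ + ∑_{j>i} μᵢⱼ yⱼ`, hence `cᵢ² ‖b̂ᵢ‖² ≤ 1`. The Lovász condition gives
`1 < ‖bⱼ‖² ≤ ∑_{i≤j} ‖b̂ᵢ‖² ≤ (2^{j+1} - 1) ‖b̂ⱼ‖²`, so `|cᵢ| ≤ 2^{n/2}`. Back substitution with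
`|μᵢⱼ| ≤ 1` doubles the bound at each step, giving `∑ |yᵢ| ≤ (2ⁿ - 1) 2^{n/2}` and `‖y‖² ≤ 8ⁿ`.
-/

open Finset Matrix

theorem sum_sq_eq_dotProduct_self {m : Type*} [Fintype m] (v : m → ℝ) :
    ∑ t, v t ^ 2 = v ⬝ᵥ v := by
  simp only [dotProduct, sq]

theorem dotProduct_sum_smul_self_of_pairwise {ι m : Type*} [Fintype m] {v : ι → m → ℝ}
    (hv : Pairwise fun i j => v i ⬝ᵥ v j = 0) (s : Finset ι) (d : ι → ℝ) :
    (∑ i ∈ s, d i • v i) ⬝ᵥ (∑ i ∈ s, d i • v i) = ∑ i ∈ s, d i ^ 2 * (v i ⬝ᵥ v i) := by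
  classical
  rw [sum_dotProduct]
  refine sum_congr rfl fun i hi => ?_
  rw [dotProduct_sum, sum_eq_single_of_mem i hi fun k _ hki => ?_]
  · simp only [smul_dotProduct, dotProduct_smul, smul_eq_mul]; ring
  · simp only [smul_dotProduct, dotProduct_smul, hv hki.symm, smul_zero]

section GramSchmidt

variable {ι m : Type*} [LinearOrder ι] [LocallyFiniteOrderBot ι]
  {b bhat : ι → m → ℝ} {μ : ι → ι → ℝ}

theorem sum_smul_eq_sum_smul_gramSchmidt [Fintype ι] [LocallyFiniteOrderTop ι]
    (hb : ∀ j, b j = bhat j + ∑ i ∈ Iio j, μ i j • bhat i) (y : ι → ℝ) :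
    ∑ j, y j • b j = ∑ i, (y i + ∑ j ∈ Ioi i, μ i j * y j) • bhat i := by
  have hswap : ∑ j, ∑ i ∈ Iio j, (μ i j * y j) • bhat i
      = ∑ i, ∑ j ∈ Ioi i, (μ i j * y j) • bhat i :=
    sum_comm' fun j i => by simp
  simp only [hb, smul_add, smul_sum, smul_smul, add_smul, sum_add_distrib, sum_smul]
  rw [← hswap]
  simp only [mul_comm]

variable [Fintype m]

theorem gramSchmidt_dotProduct_eq_zero [WellFoundedLT ι]
    (hμ : ∀ i j, i < j → μ i j = b j ⬝ᵥ bhat i / (bhat i ⬝ᵥ bhat i))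
    (hb : ∀ j, b j = bhat j + ∑ i ∈ Iio j, μ i j • bhat i) {i j : ι} (hij : i < j) :
    bhat j ⬝ᵥ bhat i = 0 := by
  induction j using WellFoundedLT.induction generalizing i with
  | _ j ih =>
  have hcross : ∀ k ∈ Iio j, k ≠ i → bhat k ⬝ᵥ bhat i = 0 := fun k hk hki => by
    rcases hki.lt_or_gt with hki | hik
    · rw [dotProduct_comm]; exact ih i hij hki
    · exact ih k (mem_Iio.mp hk) hik
  have hproj : b j ⬝ᵥ bhat i = bhat j ⬝ᵥ bhat i + μ i j * (bhat i ⬝ᵥ bhat i) := by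
    rw [hb j, add_dotProduct, sum_dotProduct,
      sum_eq_single_of_mem i (mem_Iio.mpr hij) fun k hk hki => by
        rw [smul_dotProduct, hcross k hk hki, smul_zero], smul_dotProduct, smul_eq_mul]
  by_cases hi : bhat i ⬝ᵥ bhat i = 0
  · rw [dotProduct_self_eq_zero.mp hi, dotProduct_zero]
  · rw [hμ i j hij, div_mul_cancel₀ _ hi] at hproj
    linarith

theorem gramSchmidt_pairwise_orthogonal [WellFoundedLT ι]
    (hμ : ∀ i j, i < j → μ i j = b j ⬝ᵥ bhat i / (bhat i ⬝ᵥ bhat i))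
    (hb : ∀ j, b j = bhat j + ∑ i ∈ Iio j, μ i j • bhat i) :
    Pairwise fun i j => bhat i ⬝ᵥ bhat j = 0 := fun i j hij => by
  rcases hij.lt_or_gt with h | h
  · rw [dotProduct_comm]; exact gramSchmidt_dotProduct_eq_zero hμ hb h
  · exact gramSchmidt_dotProduct_eq_zero hμ hb h

theorem gramSchmidt_dotProduct_self (horth : Pairwise fun i j => bhat i ⬝ᵥ bhat j = 0)
    (hb : ∀ j, b j = bhat j + ∑ i ∈ Iio j, μ i j • bhat i) (j : ι) :
    b j ⬝ᵥ b j = bhat j ⬝ᵥ bhat j + ∑ i ∈ Iio j, μ i j ^ 2 * (bhat i ⬝ᵥ bhat i) := by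
  have hcross : bhat j ⬝ᵥ ∑ i ∈ Iio j, μ i j • bhat i = 0 := by
    rw [dotProduct_sum]
    exact sum_eq_zero fun i hi => by
      rw [dotProduct_smul, horth (mem_Iio.mp hi).ne', smul_zero]
  rw [hb j, add_dotProduct, dotProduct_add, dotProduct_add, hcross,
    dotProduct_comm (∑ i ∈ Iio j, μ i j • bhat i), hcross,
    dotProduct_sum_smul_self_of_pairwise horth]
  ring

end GramSchmidt

theorem sum_range_succ_le_of_le_two_mul {g : ℕ → ℝ} {n : ℕ}
    (hg : ∀ i, i + 1 < n → g i ≤ 2 * g (i + 1)) {j : ℕ} (hj : j < n) :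
    ∑ i ∈ range (j + 1), g i ≤ (2 ^ (j + 1) - 1) * g j := by
  induction j with
  | zero => norm_num
  | succ j ih =>
    have hstep := hg j hj
    have hpow : (1 : ℝ) ≤ 2 ^ (j + 1) := one_le_pow₀ one_le_two
    rw [sum_range_succ, pow_succ]
    nlinarith [ih (by omega)]

theorem Fin.sum_Iic_le_of_le_two_mul {n : ℕ} {g : Fin n → ℝ}
    (hg : ∀ i : Fin n, ∀ h : i.val + 1 < n, g i ≤ 2 * g ⟨i.val + 1, h⟩) (j : Fin n) :
    ∑ i ∈ Iic j, g i ≤ (2 ^ (j.val + 1) - 1) * g j := by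
  set G : ℕ → ℝ := fun k => if h : k < n then g ⟨k, h⟩ else 0
  have hG : ∀ i : Fin n, G i = g i := fun i => dif_pos i.isLt
  have hGle : ∀ i, i + 1 < n → G i ≤ 2 * G (i + 1) := fun i h => by
    simpa [G, h, (Nat.lt_succ_self i).trans h] using hg ⟨i, by omega⟩ h
  have hsum : ∑ i ∈ Iic j, g i = ∑ k ∈ range (j.val + 1), G k := by
    rw [Nat.range_succ_eq_Iic, ← Fin.map_valEmbedding_Iic, sum_map]
    exact sum_congr rfl fun i _ => (hG i).symm
  rw [hsum, ← hG j]
  exact sum_range_succ_le_of_le_two_mul hGle j.isLt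

theorem sum_le_of_le_add_sum_Ioi {ι : Type*} [LinearOrder ι] [Fintype ι]
    [LocallyFiniteOrderTop ι] {a : ι → ℝ} {M : ℝ} (ha : ∀ i, 0 ≤ a i)
    (h : ∀ i, a i ≤ M + ∑ j ∈ Ioi i, a j) :
    ∑ i, a i ≤ (2 ^ Fintype.card ι - 1) * M := by
  classical
  suffices ∀ s : Finset ι, (∀ i ∈ s, Ioi i ⊆ s) → ∑ i ∈ s, a i ≤ (2 ^ #s - 1) * M from
    this univ fun _ _ => subset_univ _
  intro s
  induction s using Finset.induction_on_min with
  | empty => simp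
  | insert x s hxs ih =>
    intro hup
    have hx : x ∉ s := fun hx => lt_irrefl x (hxs x hx)
    have hIoi : Ioi x ⊆ s := fun j hj => by
      rcases mem_insert.mp (hup x (mem_insert_self x s) hj) with rfl | hj'
      · exact absurd (mem_Ioi.mp hj) (lt_irrefl _)
      · exact hj'
    have hs : ∑ i ∈ Ioi x, a i ≤ ∑ i ∈ s, a i :=
      sum_le_sum_of_subset_of_nonneg hIoi fun i _ _ => ha i
    have ih' := ih fun i hi j hj => by
      rcases mem_insert.mp (hup i (mem_insert_of_mem hi) hj) with rfl | hj'
      · exact absurd (hxs i hi) (not_lt.mpr (mem_Ioi.mp hj).le)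
      · exact hj'
    rw [sum_insert hx, card_insert_of_notMem hx, pow_succ]
    linarith [h x]

theorem abs_le_abs_add_sum_mul_add_sum_abs {ι : Type*} (s : Finset ι) {μ : ι → ℝ}
    (hμ : ∀ j ∈ s, |μ j| ≤ 1) (x : ℝ) (y : ι → ℝ) :
    |x| ≤ |x + ∑ j ∈ s, μ j * y j| + ∑ j ∈ s, |y j| := by
  have hS : |∑ j ∈ s, μ j * y j| ≤ ∑ j ∈ s, |y j| :=
    (abs_sum_le_sum_abs _ _).trans <| sum_le_sum fun j hj => by
      rw [abs_mul]; exact mul_le_of_le_one_left (abs_nonneg _) (hμ j hj)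
  calc |x| = |(x + ∑ j ∈ s, μ j * y j) - ∑ j ∈ s, μ j * y j| := by rw [add_sub_cancel_right]
    _ ≤ |x + ∑ j ∈ s, μ j * y j| + |∑ j ∈ s, μ j * y j| := abs_sub _ _
    _ ≤ _ := by gcongr

section LLL

variable {n : ℕ} {m : Type*} [Fintype m] {b bhat : Fin n → m → ℝ} {μ : Fin n → Fin n → ℝ}

theorem one_lt_mul_gramSchmidt_dotProduct_self
    (horth : Pairwise fun i j => bhat i ⬝ᵥ bhat j = 0)
    (hb : ∀ j, b j = bhat j + ∑ i ∈ Iio j, μ i j • bhat i)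
    (hsize : ∀ i j, i < j → |μ i j| ≤ 1)
    (hLov : ∀ i : Fin n, ∀ h : i.val + 1 < n,
      bhat i ⬝ᵥ bhat i ≤ 2 * (bhat ⟨i.val + 1, h⟩ ⬝ᵥ bhat ⟨i.val + 1, h⟩))
    (hlong : ∀ j, 1 < b j ⬝ᵥ b j) (j : Fin n) :
    1 < (2 ^ n - 1) * (bhat j ⬝ᵥ bhat j) := by
  have hg : ∀ i, 0 ≤ bhat i ⬝ᵥ bhat i := fun i => sum_nonneg fun t _ => mul_self_nonneg _
  have hμsq : ∀ i ∈ Iio j, μ i j ^ 2 * (bhat i ⬝ᵥ bhat i) ≤ bhat i ⬝ᵥ bhat i := fun i hi =>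
    mul_le_of_le_one_left (hg i) <| (sq_le_one_iff_abs_le_one _).mpr (hsize i j (mem_Iio.mp hi))
  have hpow : (2 : ℝ) ^ (j.val + 1) ≤ 2 ^ n := pow_le_pow_right₀ one_le_two j.isLt
  calc 1 < b j ⬝ᵥ b j := hlong j
    _ = bhat j ⬝ᵥ bhat j + ∑ i ∈ Iio j, μ i j ^ 2 * (bhat i ⬝ᵥ bhat i) :=
      gramSchmidt_dotProduct_self horth hb j
    _ ≤ ∑ i ∈ Iic j, bhat i ⬝ᵥ bhat i := by
      rw [Iic_eq_cons_Iio, sum_cons]; gcongr with i hi; exact hμsq i hi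
    _ ≤ (2 ^ (j.val + 1) - 1) * (bhat j ⬝ᵥ bhat j) := Fin.sum_Iic_le_of_le_two_mul hLov j
    _ ≤ (2 ^ n - 1) * (bhat j ⬝ᵥ bhat j) := by gcongr; exact hg j

theorem sum_sq_le_eight_pow_of_lll
    (hμ : ∀ i j, i < j → μ i j = b j ⬝ᵥ bhat i / (bhat i ⬝ᵥ bhat i))
    (hb : ∀ j, b j = bhat j + ∑ i ∈ Iio j, μ i j • bhat i)
    (hsize : ∀ i j, i < j → |μ i j| ≤ 1)
    (hLov : ∀ i : Fin n, ∀ h : i.val + 1 < n,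
      bhat i ⬝ᵥ bhat i ≤ 2 * (bhat ⟨i.val + 1, h⟩ ⬝ᵥ bhat ⟨i.val + 1, h⟩))
    (hlong : ∀ j, 1 < b j ⬝ᵥ b j) {y : Fin n → ℝ}
    (hy : (∑ j, y j • b j) ⬝ᵥ (∑ j, y j • b j) ≤ 1) :
    ∑ j, y j ^ 2 ≤ 8 ^ n := by
  have horth := gramSchmidt_pairwise_orthogonal hμ hb
  set c : Fin n → ℝ := fun i => y i + ∑ j ∈ Ioi i, μ i j * y j
  set M := √((2 : ℝ) ^ n)
  have h1 : (1 : ℝ) ≤ 2 ^ n := one_le_pow₀ one_le_two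
  have hc : ∑ i, c i ^ 2 * (bhat i ⬝ᵥ bhat i) ≤ 1 := by
    rwa [sum_smul_eq_sum_smul_gramSchmidt hb, dotProduct_sum_smul_self_of_pairwise horth] at hy
  have hcM : ∀ i, |c i| ≤ M := fun i => by
    have hci : c i ^ 2 * (bhat i ⬝ᵥ bhat i) ≤ 1 :=
      (single_le_sum (fun k _ => mul_nonneg (sq_nonneg (c k))
        (sum_nonneg fun t _ => mul_self_nonneg (bhat k t))) (mem_univ i)).trans hc
    have hgi := one_lt_mul_gramSchmidt_dotProduct_self horth hb hsize hLov hlong i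
    refine Real.abs_le_sqrt ?_
    nlinarith [sq_nonneg (c i)]
  have hyc : ∀ i, |y i| ≤ M + ∑ j ∈ Ioi i, |y j| := fun i =>
    (abs_le_abs_add_sum_mul_add_sum_abs _ (fun j hj => hsize i j (mem_Ioi.mp hj)) _ _).trans
      (by gcongr; exact hcM i)
  have hsum : ∑ j, |y j| ≤ (2 ^ n - 1) * M := by
    simpa using sum_le_of_le_add_sum_Ioi (fun i => abs_nonneg (y i)) hyc
  have hM : M ^ 2 = 2 ^ n := Real.sq_sqrt (by positivity)
  calc ∑ j, y j ^ 2 = ∑ j, |y j| ^ 2 := by simp only [sq_abs]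
    _ ≤ (∑ j, |y j|) ^ 2 := sum_sq_le_sq_sum_of_nonneg fun j _ => abs_nonneg _
    _ ≤ ((2 ^ n - 1) * M) ^ 2 := by gcongr
    _ ≤ ((2 : ℝ) ^ n) ^ 2 * 2 ^ n := by
      rw [mul_pow, hM]; gcongr; linarith
    _ = 8 ^ n := by rw [show (8 : ℝ) = 2 ^ 2 * 2 by norm_num, mul_pow, pow_right_comm]

end LLL

theorem Real.sqrt_le_two_rpow_of_le_eight_pow {n : ℕ} {s : ℝ} (hs : s ≤ 8 ^ n) :
    √s ≤ 2 ^ (3 * (n : ℝ) / 2) := by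
  rw [Real.sqrt_le_left (by positivity), ← Real.rpow_mul_natCast zero_le_two,
    show 3 * (n : ℝ) / 2 * (2 : ℕ) = ((3 * n : ℕ) : ℝ) by push_cast; ring, Real.rpow_natCast,
    pow_mul]
  norm_num [hs]

theorem ellipsoid_regularization_general (n : ℕ) (A : Matrix (Fin n) (Fin n) ℝ)
    (U : Matrix (Fin n) (Fin n) ℤ) (hU : |U.det| = 1)
    (B : Matrix (Fin n) (Fin n) ℝ) (hB : B = A * U.map (Int.cast : ℤ → ℝ))
    (bhat : Fin n → (Fin n → ℝ)) (μ : Fin n → Fin n → ℝ)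
    (hμdef : ∀ i j : Fin n, i < j →
      μ i j = (∑ t, B t j * bhat i t) / (∑ t, bhat i t ^ 2))
    (hgs : ∀ j : Fin n,
      bhat j = (fun t => B t j) - ∑ i ∈ Finset.univ.filter (fun i => i < j), μ i j • bhat i)
    (hred : ∀ i j : Fin n, i < j → |μ i j| ≤ 1 / 2)
    (hLov : ∀ i : Fin n, ∀ h : i.val + 1 < n,
      ∑ t, bhat i t ^ 2 ≤ 2 * ∑ t, bhat ⟨i.val + 1, h⟩ t ^ 2) :
    (∃ x : Fin n → ℤ, x ≠ 0 ∧
        Real.sqrt (∑ t, (A.mulVec (fun i => (x i : ℝ)) t) ^ 2) ≤ 1) ∨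
    (∀ x : Fin n → ℝ, Real.sqrt (∑ t, (A.mulVec x t) ^ 2) ≤ 1 →
        Real.sqrt (∑ t, (((U.map (Int.cast : ℤ → ℝ))⁻¹).mulVec x t) ^ 2) ≤
          (2 : ℝ) ^ (3 * (n : ℝ) / 2)) := by
  simp only [sum_sq_eq_dotProduct_self, Real.sqrt_le_one] at hμdef hLov ⊢
  by_cases hshort : ∃ i, Bᵀ i ⬝ᵥ Bᵀ i ≤ 1
  · obtain ⟨i, hi⟩ := hshort
    refine Or.inl ⟨Uᵀ i, fun h0 => ?_, ?_⟩
    · simp [det_eq_zero_of_column_eq_zero i fun j => congrFun h0 j] at hU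
    · have hcol : A *ᵥ (fun j => (Uᵀ i j : ℝ)) = Bᵀ i := by
        ext t; simp [hB, mulVec, dotProduct, mul_apply]
      rwa [hcol]
  · push Not at hshort
    refine Or.inr fun x hx => Real.sqrt_le_two_rpow_of_le_eight_pow ?_
    set U' := U.map (Int.cast : ℤ → ℝ)
    have hU' : IsUnit U'.det := by
      rw [← Int.cast_det]
      exact (Int.isUnit_iff_abs_eq.mpr hU).map (Int.castRingHom ℝ)
    have hb : ∀ j, Bᵀ j = bhat j + ∑ i ∈ Iio j, μ i j • bhat i := fun j => by
      rw [hgs j, ← filter_gt_eq_Iio]; abel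
    have hcols : ∀ y, ∑ j, y j • Bᵀ j = B *ᵥ y := fun y => by simp [mulVec_eq_sum]
    have hBx : ∑ j, (U'⁻¹ *ᵥ x) j • Bᵀ j = A *ᵥ x := by
      rw [hcols, hB, mulVec_mulVec, Matrix.mul_assoc, mul_nonsing_inv _ hU', Matrix.mul_one]
    rw [← sum_sq_eq_dotProduct_self]
    exact sum_sq_le_eight_pow_of_lll hμdef hb (fun i j hij => (hred i j hij).trans (by norm_num))
      hLov hshort (hBx ▸ hx)

/-- **Ellipsoid regularization via an LLL-reduced unimodular transformation (Lemma 3.5).**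
Let `E = {x : ‖Ax‖₂ ≤ 1}` for an invertible `A`, and let `U` be unimodular such that the
columns of `B = AU` form an LLL-reduced basis. Then either `E` contains a nonzero integer
point, or every `x ∈ E` satisfies `‖U⁻¹x‖₂ ≤ 2^{3n/2}`. -/
theorem ellipsoid_regularization (n : ℕ) (A : Matrix (Fin n) (Fin n) ℝ)
    (hA : IsUnit A.det)
    (U : Matrix (Fin n) (Fin n) ℤ) (hU : |U.det| = 1)
    (B : Matrix (Fin n) (Fin n) ℝ) (hB : B = A * U.map (Int.cast : ℤ → ℝ))
    (bhat : Fin n → (Fin n → ℝ)) (μ : Fin n → Fin n → ℝ)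
    (hμdef : ∀ i j : Fin n, i < j →
      μ i j = (∑ t, B t j * bhat i t) / (∑ t, bhat i t ^ 2))
    (hgs : ∀ j : Fin n,
      bhat j = (fun t => B t j) - ∑ i ∈ Finset.univ.filter (fun i => i < j), μ i j • bhat i)
    (hred : ∀ i j : Fin n, i < j → |μ i j| ≤ 1 / 2)
    (hLov : ∀ i : Fin n, ∀ h : i.val + 1 < n,
      ∑ t, bhat i t ^ 2 ≤ 2 * ∑ t, bhat ⟨i.val + 1, h⟩ t ^ 2) :
    (∃ x : Fin n → ℤ, x ≠ 0 ∧
        Real.sqrt (∑ t, (A.mulVec (fun i => (x i : ℝ)) t) ^ 2) ≤ 1) ∨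
    (∀ x : Fin n → ℝ, Real.sqrt (∑ t, (A.mulVec x t) ^ 2) ≤ 1 →
        Real.sqrt (∑ t, (((U.map (Int.cast : ℤ → ℝ))⁻¹).mulVec x t) ^ 2) ≤
          (2 : ℝ) ^ (3 * (n : ℝ) / 2)) :=
  ellipsoid_regularization_general n A U hU B hB bhat μ hμdef hgs hred hLov
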